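/- For every τ ∈ ℂ with Im τ > 0, every σ ∈ ℂ with σ ∉ ℤ + ℤτ, every z ∈ ℂ with z ∉ ℤ + ℤτ, and all integers m, n, one has φ_st(z + mτ + n, τ, σ) = exp(−2πimσ) · φ_st(z,τ,σ). -/

import Mathlib

open Complex Filter


private lemma one_add_ne_zero_of_norm_lt_one {w : ℂ} (h : ‖w‖ < 1) : 1 + w ≠ 0 := by
  intro h0
  have : w = -1 := by linear_combination h0
  rw [this] at h; simp at h

private lemma summable_log_one_add {f : ℕ → ℂ} (hf : Summable f) (h : ∀ k, ‖f k‖ ≤ 1/2) :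
    Summable fun k => Complex.log (1 + f k) := by
  apply Summable.of_norm_bounded (g := fun k => 3/2 * ‖f k‖) (hf.norm.mul_left _)
  exact fun k => Complex.norm_log_one_add_half_le_self (h k)

private lemma multipliable_one_add' {f : ℕ → ℂ} (hf : Summable f) :
    Multipliable fun k => 1 + f k := by
  obtain ⟨N, hN⟩ : ∃ N, ∀ k ≥ N, ‖f k‖ ≤ 1/2 := by
    have := Metric.tendsto_atTop.mp hf.tendsto_atTop_zero (1/2) (by norm_num)
    obtain ⟨N, hN⟩ := this
    exact ⟨N, fun k hk => by simpa [dist_eq_norm] using (hN k hk).le⟩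
  apply Multipliable.comp_nat_add (k := N)
  have hs : Summable fun n => f (n + N) := (summable_nat_add_iff N).2 hf
  exact Complex.multipliable_of_summable_log
    (summable_log_one_add hs (fun n => hN _ (Nat.le_add_left N n)))

private lemma tprod_one_add_ne_zero {f : ℕ → ℂ} (hf : Summable f) (h0 : ∀ k, 1 + f k ≠ 0) :
    (∏' k, (1 + f k)) ≠ 0 := by
  obtain ⟨N, hN⟩ : ∃ N, ∀ k ≥ N, ‖f k‖ ≤ 1/2 := by
    have := Metric.tendsto_atTop.mp hf.tendsto_atTop_zero (1/2) (by norm_num)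
    obtain ⟨N, hN⟩ := this
    exact ⟨N, fun k hk => by simpa [dist_eq_norm] using (hN k hk).le⟩
  have hs : Summable fun k => Complex.log (1 + f k) := by
    rw [← summable_nat_add_iff N]
    exact summable_log_one_add ((summable_nat_add_iff N).2 hf) (fun n => hN _ (Nat.le_add_left N n))
  have this : Complex.exp (∑' k, Complex.log (1 + f k)) = ∏' k, (1 + f k) :=
    Complex.cexp_tsum_eq_tprod (f := fun k => 1 + f k) h0 hs
  rw [← this]
  exact Complex.exp_ne_zero _

noncomputable def Fq (q x : ℂ) : ℂ := ∏' k : ℕ, (1 - x * q ^ k)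

private lemma summable_xq {q : ℂ} (hq : ‖q‖ < 1) (x : ℂ) :
    Summable fun k : ℕ => -(x * q ^ k) :=
  ((summable_geometric_of_norm_lt_one hq).mul_left x).neg

private lemma multF {q : ℂ} (hq : ‖q‖ < 1) (x : ℂ) :
    Multipliable fun k : ℕ => 1 - x * q ^ k :=
  (multipliable_one_add' (summable_xq hq x)).congr (fun k => by ring)

private lemma Fshift {q : ℂ} (hq : ‖q‖ < 1) (x : ℂ) : Fq q x = (1 - x) * Fq q (x * q) := by
  have hm : Multipliable fun n : ℕ => 1 - x * q ^ (n + 1) :=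
    (multF hq (x * q)).congr (fun k => by rw [pow_succ']; ring)
  rw [Fq, tprod_eq_zero_mul' (f := fun k : ℕ => 1 - x * q ^ k) hm, pow_zero, mul_one, Fq]
  congr 1
  exact tprod_congr (fun b => by rw [pow_succ']; ring)

private lemma Fq_ne_zero {q : ℂ} (hq : ‖q‖ < 1) {x : ℂ} (hx : ∀ k : ℕ, 1 - x * q ^ k ≠ 0) :
    Fq q x ≠ 0 := by
  have h := tprod_one_add_ne_zero (summable_xq hq x)
    (fun k => by have := hx k; intro h; exact this (by linear_combination h))
  rw [Fq, tprod_congr (fun k : ℕ => (by ring : (1 : ℂ) - x * q ^ k = 1 + -(x * q ^ k)))]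
  exact h

private lemma norm_pow_succ_lt_one {q : ℂ} (hq : ‖q‖ < 1) (k : ℕ) : ‖q ^ (k+1)‖ < 1 := by
  rw [norm_pow]
  exact pow_lt_one₀ (norm_nonneg q) hq (Nat.succ_ne_zero k)

private lemma d_ne_zero {q : ℂ} (hq : ‖q‖ < 1) (k : ℕ) : (1 : ℂ) - q ^ (k+1) ≠ 0 := by
  have h := norm_pow_succ_lt_one hq k
  intro h0
  exact one_add_ne_zero_of_norm_lt_one (w := -(q^(k+1))) (by rwa [norm_neg]) (by linear_combination h0)

private lemma Fq_q_ne_zero {q : ℂ} (hq : ‖q‖ < 1) : Fq q q ≠ 0 := by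
  apply Fq_ne_zero hq
  intro k
  have h : (1 : ℂ) - q ^ (k+1) ≠ 0 := d_ne_zero hq k
  intro h0
  exact h (by rw [pow_succ']; linear_combination h0)

private lemma mult_e {q : ℂ} (hq : ‖q‖ < 1) (x : ℂ) :
    Multipliable fun k : ℕ => (1 - x * q ^ (k+1)) / (1 - q ^ (k+1)) := by
  have h1 : (0:ℝ) < 1 - ‖q‖ := by linarith
  have h2 : ∀ k : ℕ, 1 - ‖q‖ ≤ ‖(1:ℂ) - q ^ (k+1)‖ := by
    intro k
    have hp : ‖q ^ (k+1)‖ ≤ ‖q‖ := by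
      rw [norm_pow, pow_succ']
      calc ‖q‖ * ‖q‖^k ≤ ‖q‖ * 1 :=
            mul_le_mul_of_nonneg_left (pow_le_one₀ (norm_nonneg q) hq.le) (norm_nonneg q)
      _ = ‖q‖ := mul_one _
    have htri : (1:ℝ) - ‖q ^ (k+1)‖ ≤ ‖(1:ℂ) - q ^ (k+1)‖ := by
      have := norm_sub_norm_le (1:ℂ) (q^(k+1))
      simpa using this
    linarith
  have hsum : Summable fun k : ℕ => (1 - x) * q ^ (k+1) / (1 - q ^ (k+1)) := by
    apply Summable.of_norm_bounded
      (g := fun k => (‖1 - x‖ * (1 - ‖q‖)⁻¹ * ‖q‖) * ‖q‖ ^ k)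
      ((summable_geometric_of_lt_one (norm_nonneg q) hq).mul_left _)
    intro k
    rw [norm_div, norm_mul, norm_pow]
    rw [div_le_iff₀ (lt_of_lt_of_le h1 (h2 k))]
    have hk := h2 k
    have hnn : (0:ℝ) ≤ ‖q‖^k := pow_nonneg (norm_nonneg q) k
    have hinv : (1:ℝ) = (1-‖q‖)⁻¹ * (1-‖q‖) := (inv_mul_cancel₀ h1.ne').symm
    calc ‖1 - x‖ * ‖q‖ ^ (k+1) = (‖1-x‖ * (1-‖q‖)⁻¹ * ‖q‖ * ‖q‖^k) * (1-‖q‖) := by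
          rw [pow_succ',
            show ‖1-x‖ * (1-‖q‖)⁻¹ * ‖q‖ * ‖q‖^k * (1-‖q‖)
              = ‖1-x‖ * (‖q‖ * ‖q‖^k) * ((1-‖q‖)⁻¹*(1-‖q‖)) from by ring,
            inv_mul_cancel₀ h1.ne', mul_one]
    _ ≤ (‖1-x‖ * (1-‖q‖)⁻¹ * ‖q‖ * ‖q‖^k) * ‖(1:ℂ) - q^(k+1)‖ := by
          apply mul_le_mul_of_nonneg_left hk
          positivity
    _ = _ := by ring
  exact (multipliable_one_add' hsum).congr (fun k => by
    field_simp [d_ne_zero hq k]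
    ring)

private lemma multA {q : ℂ} (hq : ‖q‖ < 1) (x : ℂ) :
    Multipliable fun k : ℕ => 1 - x * q ^ (k + 1) :=
  (multF hq (x * q)).congr (fun k => by rw [pow_succ']; ring)

private lemma FqA {q : ℂ} (x : ℂ) : (∏' k : ℕ, (1 - x * q ^ (k+1))) = Fq q (x * q) := by
  rw [Fq]; exact tprod_congr (fun k => by rw [pow_succ']; ring)

private lemma G_eq {q : ℂ} (hq : ‖q‖ < 1) (x y : ℂ) :
    (∏' k : ℕ, ((1 - x * q ^ (k+1)) * (1 - y * q ^ (k+1)) / (1 - q ^ (k+1)) ^ 2))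
      * Fq q q ^ 2 = Fq q (x * q) * Fq q (y * q) := by
  have hd : Multipliable fun k : ℕ => (1:ℂ) - q ^ (k+1) := multA hq 1 |>.congr (fun k => by ring)
  have he := mult_e hq x
  have hf := mult_e hq y
  have hFqq : Fq q q = ∏' k : ℕ, ((1:ℂ) - q ^ (k+1)) := by
    rw [Fq]; exact tprod_congr (fun k => by rw [pow_succ'])
  have step1 : (∏' k : ℕ, ((1 - x * q ^ (k+1)) * (1 - y * q ^ (k+1)) / (1 - q ^ (k+1)) ^ 2))
      = ∏' k : ℕ, ((1 - x * q ^ (k+1)) / (1 - q ^ (k+1)) * ((1 - y * q ^ (k+1)) / (1 - q ^ (k+1)))) :=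
    tprod_congr (fun k => by rw [div_mul_div_comm]; ring_nf)
  rw [step1, hFqq, sq]
  rw [← mul_assoc, ← Multipliable.tprod_mul (he.mul hf) hd]
  have step2 : (∏' k : ℕ, ((1 - x * q ^ (k+1)) / (1 - q ^ (k+1)) * ((1 - y * q ^ (k+1)) / (1 - q ^ (k+1))) * (1 - q ^ (k+1))))
      = ∏' k : ℕ, ((1 - x * q ^ (k+1)) / (1 - q ^ (k+1)) * (1 - y * q ^ (k+1))) :=
    tprod_congr (fun k => by field_simp [d_ne_zero hq k])
  rw [step2, Multipliable.tprod_mul he (multA hq y), mul_assoc, mul_comm (∏' k : ℕ, ((1:ℂ) - y * q^(k+1))), ← mul_assoc,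
    ← Multipliable.tprod_mul he hd]
  have step3 : (∏' k : ℕ, ((1 - x * q ^ (k+1)) / (1 - q ^ (k+1)) * (1 - q ^ (k+1))))
      = ∏' k : ℕ, ((1:ℂ) - x * q ^ (k+1)) :=
    tprod_congr (fun k => by field_simp [d_ne_zero hq k])
  rw [step3, FqA, FqA]

/-- `Φ(z,τ) = (exp(πiz) − exp(−πiz)) · ∏_{k=1}^∞ (1 − t q^k)(1 − t⁻¹ q^k)/(1 − q^k)²`,
with `q = exp(2πiτ)`, `t = exp(2πiz)`; for `Im τ > 0` (so `|q| < 1`) the product converges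
absolutely. -/
noncomputable def Phi (z τ : ℂ) : ℂ :=
  (Complex.exp (Real.pi * Complex.I * z) - Complex.exp (-(Real.pi * Complex.I * z))) *
    ∏' k : ℕ,
      (1 - Complex.exp (2 * Real.pi * Complex.I * z) *
            Complex.exp (2 * Real.pi * Complex.I * τ) ^ (k + 1)) *
        (1 - (Complex.exp (2 * Real.pi * Complex.I * z))⁻¹ *
            Complex.exp (2 * Real.pi * Complex.I * τ) ^ (k + 1)) /
        (1 - Complex.exp (2 * Real.pi * Complex.I * τ) ^ (k + 1)) ^ 2

/-- The stabilized function `φ_st(z,τ,σ) = Φ(z+σ,τ)/(Φ(z,τ)·Φ(σ,τ))`, defined whenever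
`Φ(z,τ) ≠ 0` and `Φ(σ,τ) ≠ 0`. -/
noncomputable def phiSt (z τ σ : ℂ) : ℂ := Phi (z + σ) τ / (Phi z τ * Phi σ τ)

lemma norm_q_lt_one {τ : ℂ} (hτ : 0 < τ.im) :
    ‖Complex.exp (2 * Real.pi * Complex.I * τ)‖ < 1 := by
  rw [Complex.norm_exp, Real.exp_lt_one_iff]
  have : (2 * (Real.pi:ℂ) * Complex.I * τ).re = -(2 * Real.pi * τ.im) := by
    simp [Complex.mul_re, Complex.mul_im]
  rw [this]
  have := Real.pi_pos
  nlinarith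

lemma Phi_eq (z τ : ℂ) (hq : ‖Complex.exp (2 * Real.pi * Complex.I * τ)‖ < 1) :
    Phi z τ * Fq (Complex.exp (2 * Real.pi * Complex.I * τ)) (Complex.exp (2 * Real.pi * Complex.I * τ)) ^ 2 =
      (Complex.exp (Real.pi * Complex.I * z) - Complex.exp (-(Real.pi * Complex.I * z))) *
        (Fq (Complex.exp (2 * Real.pi * Complex.I * τ))
            (Complex.exp (2 * Real.pi * Complex.I * z) * Complex.exp (2 * Real.pi * Complex.I * τ)) *
         Fq (Complex.exp (2 * Real.pi * Complex.I * τ))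
            ((Complex.exp (2 * Real.pi * Complex.I * z))⁻¹ * Complex.exp (2 * Real.pi * Complex.I * τ))) := by
  rw [Phi, mul_assoc,
    G_eq hq (Complex.exp (2 * Real.pi * Complex.I * z)) (Complex.exp (2 * Real.pi * Complex.I * z))⁻¹]

lemma key_tau {τ : ℂ} (hτ : 0 < τ.im) (z : ℂ) :
    Phi (z + τ) τ = -Complex.exp (-(Real.pi * Complex.I * τ)) *
      Complex.exp (-(2 * Real.pi * Complex.I * z)) * Phi z τ := by
  have hq := norm_q_lt_one hτ
  have P1 := Phi_eq z τ hq
  have P2 := Phi_eq (z + τ) τ hq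
  have e1 : Complex.exp (Real.pi * Complex.I * (z + τ))
      = Complex.exp (Real.pi * Complex.I * z) * Complex.exp (Real.pi * Complex.I * τ) := by
    rw [← Complex.exp_add]; congr 1; ring
  have e3 : Complex.exp (2 * Real.pi * Complex.I * (z + τ))
      = Complex.exp (2 * Real.pi * Complex.I * z) * Complex.exp (2 * Real.pi * Complex.I * τ) := by
    rw [← Complex.exp_add]; congr 1; ring
  rw [e1, Complex.exp_neg, e1, e3] at P2
  rw [Complex.exp_neg] at P1
  rw [Complex.exp_neg, Complex.exp_neg]
  set q := Complex.exp (2 * Real.pi * Complex.I * τ) with hqdef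
  set t := Complex.exp (2 * Real.pi * Complex.I * z) with htdef
  set u := Complex.exp (Real.pi * Complex.I * z) with hudef
  set v := Complex.exp (Real.pi * Complex.I * τ) with hvdef
  have hqv : q = v * v := by rw [hqdef, hvdef, ← Complex.exp_add]; congr 1; ring
  have htu : t = u * u := by rw [htdef, hudef, ← Complex.exp_add]; congr 1; ring
  have hu : u ≠ 0 := Complex.exp_ne_zero _
  have hv' : v ≠ 0 := Complex.exp_ne_zero _
  have hq0 : q ≠ 0 := Complex.exp_ne_zero _
  have ht0 : t ≠ 0 := Complex.exp_ne_zero _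
  have e7 : (t * q)⁻¹ * q = t⁻¹ := by field_simp
  rw [e7] at P2
  have Fsh1 : Fq q t⁻¹ = (1 - t⁻¹) * Fq q (t⁻¹ * q) := Fshift hq t⁻¹
  have Fsh2 : Fq q (t * q) = (1 - t * q) * Fq q (t * q * q) := Fshift hq (t * q)
  have E : (u * v - (u * v)⁻¹) * (1 - t⁻¹) =
      (-v⁻¹ * t⁻¹) * ((u - u⁻¹) * (1 - t * q)) := by
    rw [htu, hqv]; field_simp; ring
  by_cases h : (1 : ℂ) - t * q = 0
  · have hPz : Phi z τ = 0 := by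
      have h0 : Phi z τ * Fq q q ^ 2 = 0 := by rw [P1, Fsh2, h]; ring
      rcases mul_eq_zero.mp h0 with h' | h'
      · exact h'
      · exact absurd h' (pow_ne_zero 2 (Fq_q_ne_zero hq))
    have hS' : u * v - (u * v)⁻¹ = 0 := by
      have htq1 : t * q = 1 := by linear_combination -h
      have huv : (u * v) * (u * v) = 1 := by rw [htu, hqv] at htq1; linear_combination htq1
      have hinv : (u * v)⁻¹ = u * v := inv_eq_of_mul_eq_one_right huv
      rw [hinv]; ring
    have hPzt : Phi (z + τ) τ = 0 := by
      have h0 : Phi (z + τ) τ * Fq q q ^ 2 = 0 := by rw [P2, hS']; ring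
      rcases mul_eq_zero.mp h0 with h' | h'
      · exact h'
      · exact absurd h' (pow_ne_zero 2 (Fq_q_ne_zero hq))
    rw [hPz, hPzt]; ring
  · apply mul_right_cancel₀ (b := Fq q q ^ 2 * (1 - t * q))
      (mul_ne_zero (pow_ne_zero 2 (Fq_q_ne_zero hq)) h)
    calc Phi (z + τ) τ * (Fq q q ^ 2 * (1 - t * q))
        = (Phi (z + τ) τ * Fq q q ^ 2) * (1 - t * q) := by ring
      _ = ((u * v - (u * v)⁻¹) * (Fq q (t * q * q) * Fq q t⁻¹)) * (1 - t * q) := by rw [P2]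
      _ = ((u * v - (u * v)⁻¹) * (1 - t⁻¹)) * (Fq q (t * q * q) * Fq q (t⁻¹ * q)) * (1 - t * q) := by
            rw [Fsh1]; ring
      _ = ((-v⁻¹ * t⁻¹) * ((u - u⁻¹) * (1 - t * q))) * (Fq q (t * q * q) * Fq q (t⁻¹ * q)) * (1 - t * q) := by
            rw [E]
      _ = (-v⁻¹ * t⁻¹) * (u - u⁻¹) * (((1 - t * q) * Fq q (t * q * q)) * Fq q (t⁻¹ * q)) * (1 - t * q) := by
            ring
      _ = (-v⁻¹ * t⁻¹) * (u - u⁻¹) * (Fq q (t * q) * Fq q (t⁻¹ * q)) * (1 - t * q) := by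
            rw [← Fsh2]
      _ = (-v⁻¹ * t⁻¹) * (Phi z τ * Fq q q ^ 2) * (1 - t * q) := by rw [P1]; ring
      _ = -v⁻¹ * t⁻¹ * Phi z τ * (Fq q q ^ 2 * (1 - t * q)) := by ring

lemma Phi_int (τ z : ℂ) (n : ℤ) : Phi (z + n) τ = (-1) ^ n * Phi z τ := by
  have hw : Complex.exp (Real.pi * Complex.I * (n : ℂ)) = (-1) ^ n := by
    rw [show (Real.pi : ℂ) * Complex.I * (n : ℂ) = (n : ℂ) * (Real.pi * Complex.I) by ring,
      Complex.exp_int_mul, Complex.exp_pi_mul_I]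
  have hwinv : ((-1 : ℂ) ^ n)⁻¹ = (-1) ^ n := by
    rw [← inv_zpow, inv_neg, inv_one]
  have h1 : Complex.exp (Real.pi * Complex.I * (z + n))
      = Complex.exp (Real.pi * Complex.I * z) * (-1) ^ n := by
    rw [mul_add, Complex.exp_add, hw]
  have hw2 : Complex.exp (-(Real.pi * Complex.I * (n : ℂ))) = (-1) ^ n := by
    rw [Complex.exp_neg, hw, hwinv]
  have h2 : Complex.exp (-(Real.pi * Complex.I * (z + n)))
      = Complex.exp (-(Real.pi * Complex.I * z)) * (-1) ^ n := by
    rw [show -(Real.pi * Complex.I * (z + (n:ℂ))) = -(Real.pi * Complex.I * z) + -(Real.pi * Complex.I * (n:ℂ)) by ring,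
      Complex.exp_add, hw2]
  have h3 : Complex.exp (2 * Real.pi * Complex.I * (z + n))
      = Complex.exp (2 * Real.pi * Complex.I * z) := by
    rw [mul_add, Complex.exp_add,
      show 2 * (Real.pi : ℂ) * Complex.I * (n : ℂ) = (n : ℂ) * (2 * Real.pi * Complex.I) by ring,
      Complex.exp_int_mul, Complex.exp_two_pi_mul_I, one_zpow, mul_one]
  rw [Phi, Phi, h1, h2, h3]
  ring

lemma key_m {τ : ℂ} (hτ : 0 < τ.im) (m : ℤ) :
    ∃ C : ℂ, C ≠ 0 ∧ ∀ z : ℂ, Phi (z + (m : ℂ) * τ) τ =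
      C * Complex.exp (-(2 * Real.pi * Complex.I * (m : ℂ) * z)) * Phi z τ := by
  induction m using Int.induction_on with
  | zero => exact ⟨1, one_ne_zero, fun z => by push_cast; simp⟩
  | succ i ih =>
    obtain ⟨C, hC, h⟩ := ih
    refine ⟨C * Complex.exp (-(2 * Real.pi * Complex.I * ((i : ℤ) : ℂ) * τ)) *
      (-Complex.exp (-(Real.pi * Complex.I * τ))),
      by simp [hC, Complex.exp_ne_zero], fun z => ?_⟩
    have harg : z + ((((i : ℤ) + 1 : ℤ) : ℂ)) * τ = (z + τ) + ((i : ℤ) : ℂ) * τ := by push_cast; ring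
    rw [harg, h (z + τ), key_tau hτ z]
    have e1 : Complex.exp (-(2 * Real.pi * Complex.I * ((i : ℤ) : ℂ) * (z + τ))) *
        Complex.exp (-(2 * Real.pi * Complex.I * z)) =
        Complex.exp (-(2 * Real.pi * Complex.I * ((i : ℤ) : ℂ) * τ)) *
        Complex.exp (-(2 * Real.pi * Complex.I * ((((i : ℤ) + 1 : ℤ)) : ℂ) * z)) := by
      rw [← Complex.exp_add, ← Complex.exp_add]; congr 1; push_cast; ring
    linear_combination (C * (-Complex.exp (-(Real.pi * Complex.I * τ))) * Phi z τ) * e1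
  | pred i ih =>
    obtain ⟨C, hC, h⟩ := ih
    refine ⟨C * Complex.exp (2 * Real.pi * Complex.I * ((-(i : ℤ) : ℤ) : ℂ) * τ) *
      Complex.exp (-(2 * Real.pi * Complex.I * τ)) * (-Complex.exp (Real.pi * Complex.I * τ)),
      by simp [hC, Complex.exp_ne_zero], fun z => ?_⟩
    have harg : z + (((-(i : ℤ) - 1 : ℤ)) : ℂ) * τ = (z - τ) + ((-(i : ℤ) : ℤ) : ℂ) * τ := by push_cast; ring
    have H1 := h (z - τ)
    have H2 := key_tau hτ (z - τ)
    rw [sub_add_cancel] at H2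
    rw [harg, H1]
    -- H2 : Phi z = -exp(-(πIτ)) * exp(-(2πI(z-τ))) * Phi (z-τ)
    -- want : C * exp(-(2πI(-i)(z-τ))) * Phi (z-τ) = C' * exp(-(2πI(-i-1)z)) * Phi z
    have e1 : Complex.exp (-(2 * Real.pi * Complex.I * ((-(i:ℤ) : ℤ) : ℂ) * (z - τ))) =
        Complex.exp (2 * Real.pi * Complex.I * ((-(i : ℤ) : ℤ) : ℂ) * τ) *
        Complex.exp (-(2 * Real.pi * Complex.I * τ)) *
        Complex.exp (-(Real.pi * Complex.I * τ)) * Complex.exp (Real.pi * Complex.I * τ) *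
        Complex.exp (-(2 * Real.pi * Complex.I * ((-(i : ℤ) - 1 : ℤ) : ℂ) * z)) *
        Complex.exp (-(2 * Real.pi * Complex.I * (z - τ))) := by
      rw [← Complex.exp_add, ← Complex.exp_add, ← Complex.exp_add, ← Complex.exp_add,
        ← Complex.exp_add]
      congr 1; push_cast; ring
    rw [H2, e1]
    ring
  done

/-- Quasi-periodicity of `φ_st`: `φ_st(z + mτ + n, τ, σ) = exp(−2πimσ) φ_st(z,τ,σ)`. -/
theorem phiSt_lattice_transform (τ : ℂ) (hτ : 0 < τ.im) (σ : ℂ)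
    (hσ : ¬ ∃ m n : ℤ, σ = (m : ℂ) * τ + (n : ℂ)) (z : ℂ)
    (hz : ¬ ∃ m n : ℤ, z = (m : ℂ) * τ + (n : ℂ)) (m n : ℤ) :
    phiSt (z + (m : ℂ) * τ + (n : ℂ)) τ σ =
      Complex.exp (-(2 * Real.pi * Complex.I * (m : ℂ) * σ)) * phiSt z τ σ := by
  obtain ⟨C, hC, hkey⟩ := key_m hτ m
  -- full transform with constant C' = (-1)^n * C
  have key : ∀ w : ℂ, Phi (w + (m : ℂ) * τ + (n : ℂ)) τ =
      ((-1) ^ n * C) * Complex.exp (-(2 * Real.pi * Complex.I * (m : ℂ) * w)) * Phi w τ := by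
    intro w
    rw [show w + (m : ℂ) * τ + (n : ℂ) = (w + (m : ℂ) * τ) + (n : ℂ) by ring,
      Phi_int τ _ n, hkey w]
    ring
  have hC' : ((-1 : ℂ) ^ n * C) ≠ 0 := mul_ne_zero (zpow_ne_zero n (by norm_num)) hC
  rw [phiSt, phiSt]
  have harg : z + (m : ℂ) * τ + (n : ℂ) + σ = (z + σ) + (m : ℂ) * τ + (n : ℂ) := by ring
  rw [harg, key (z + σ), key z]
  have esplit : Complex.exp (-(2 * Real.pi * Complex.I * (m : ℂ) * (z + σ))) =
      Complex.exp (-(2 * Real.pi * Complex.I * (m : ℂ) * z)) *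
      Complex.exp (-(2 * Real.pi * Complex.I * (m : ℂ) * σ)) := by
    rw [← Complex.exp_add]; congr 1; ring
  rw [esplit]
  set D := (-1 : ℂ) ^ n * C * Complex.exp (-(2 * Real.pi * Complex.I * (m : ℂ) * z)) with hD
  have hD0 : D ≠ 0 := mul_ne_zero hC' (Complex.exp_ne_zero _)
  rw [show (-1 : ℂ) ^ n * C * (Complex.exp (-(2 * Real.pi * Complex.I * (m : ℂ) * z)) *
      Complex.exp (-(2 * Real.pi * Complex.I * (m : ℂ) * σ))) * Phi (z + σ) τ
      = D * (Complex.exp (-(2 * Real.pi * Complex.I * (m : ℂ) * σ)) * Phi (z + σ) τ) by rw [hD]; ring,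
    show (-1 : ℂ) ^ n * C * Complex.exp (-(2 * Real.pi * Complex.I * (m : ℂ) * z)) * Phi z τ * Phi σ τ
      = D * (Phi z τ * Phi σ τ) by rw [hD]; ring,
    mul_div_mul_left _ _ hD0, mul_div_assoc]
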